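/- Let Ω ⊂ ℝ² be a bounded measurable set, α, β : Ω → ℝ bounded measurable real-valued functions, k ∈ ℝ² fixed, and i ∈ {1, 2} with eᵢ the corresponding standard basis vector. Define, for continuously differentiable square-integrable u, v with square-integrable gradients, a_κ(u, v) = ∫_Ω α ((∇+iκ)u)·conj((∇+iκ)v) dx, b(u, v) = ∫_Ω β u conj(v) dx, m_α(u, v) = ∫_Ω α u conj(v) dx, and m_{αi}(u, v) = ∫_Ω i α ( u ∂ᵢconj(v) − conj(v) ∂ᵢu ) dx. Suppose: (1) t ↦ u_t is a family of such functions defined for t in a neighborhood of 0, differentiable at t = 0 with derivative w, such that t ↦ a_{k+teᵢ}(u_t, u_t) and t ↦ b(u_t, u_t) are differentiable at 0 with derivatives given by the Leibniz rule (differentiation under the integral sign is valid); (2) λ : ℝ → ℝ is differentiable at 0 and for each t near 0, a_{k+teᵢ}(u_t, v) = λ(t) b(u_t, v) holds for v = u_t and, at t = 0, also for v = w; (3) b(u_t, u_t) = 1 for all t near 0. Then λ'(0) = 2k_i m_α(u₀, u₀) + m_{αi}(u₀, u₀). -/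

import Mathlib

/-!
Since `b(u_t, u_t) = 1` near `0`, the eigenvalue relation gives `λ(t) = a_{k+teᵢ}(u_t, u_t)` there,
so `λ'(0)` is the Leibniz derivative of the quadratic form. Its two terms containing `w` are
`a_k(w, u₀) + a_k(u₀, w) = λ(0) (b(w, u₀) + b(u₀, w))` by the eigenvalue relation tested against `w`
and Hermitian symmetry, and this is `λ(0)` times the derivative of the constant `b(u_t, u_t)`, i.e. `0`.
-/

open MeasureTheory

/-- Partial derivative in the `i`-th coordinate of a complex-valued function on `ℝ²`. -/
noncomputable def pd2 (i : Fin 2) (f : (Fin 2 → ℝ) → ℂ) (x : Fin 2 → ℝ) : ℂ :=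
  fderiv ℝ f x (Pi.single i 1)

/-- The sesquilinear form `a_κ(u,v) = ∫_Ω α ((∇+iκ)u)·conj((∇+iκ)v) dx`. -/
noncomputable def formA (Ω : Set (Fin 2 → ℝ)) (α : (Fin 2 → ℝ) → ℝ) (κ : Fin 2 → ℝ)
    (u v : (Fin 2 → ℝ) → ℂ) : ℂ :=
  ∫ x in Ω, (α x : ℂ) * ∑ j : Fin 2,
    (pd2 j u x + Complex.I * (κ j : ℂ) * u x) *
      (starRingEnd ℂ) (pd2 j v x + Complex.I * (κ j : ℂ) * v x)

/-- The sesquilinear form `b(u,v) = ∫_Ω β u conj(v) dx`. -/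
noncomputable def formB (Ω : Set (Fin 2 → ℝ)) (β : (Fin 2 → ℝ) → ℝ)
    (u v : (Fin 2 → ℝ) → ℂ) : ℂ :=
  ∫ x in Ω, (β x : ℂ) * u x * (starRingEnd ℂ) (v x)

/-- The form `m_α(u,v) = ∫_Ω α u conj(v) dx`. -/
noncomputable def formMa (Ω : Set (Fin 2 → ℝ)) (α : (Fin 2 → ℝ) → ℝ)
    (u v : (Fin 2 → ℝ) → ℂ) : ℂ :=
  ∫ x in Ω, (α x : ℂ) * u x * (starRingEnd ℂ) (v x)

/-- The form `m_{αi}(u,v) = ∫_Ω iα (u ∂ᵢconj(v) − conj(v) ∂ᵢu) dx`. -/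
noncomputable def formMai (Ω : Set (Fin 2 → ℝ)) (α : (Fin 2 → ℝ) → ℝ) (i : Fin 2)
    (u v : (Fin 2 → ℝ) → ℂ) : ℂ :=
  ∫ x in Ω, Complex.I * (α x : ℂ) *
    (u x * pd2 i (fun y => (starRingEnd ℂ) (v y)) x
      - (starRingEnd ℂ) (v x) * pd2 i u x)

section Hermitian

variable (Ω : Set (Fin 2 → ℝ))

lemma formA_conj_symm (α : (Fin 2 → ℝ) → ℝ) (κ : Fin 2 → ℝ) (u v : (Fin 2 → ℝ) → ℂ) :
    (starRingEnd ℂ) (formA Ω α κ u v) = formA Ω α κ v u := by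
  unfold formA
  rw [← integral_conj]
  refine integral_congr_ae (Filter.Eventually.of_forall fun x => ?_)
  simp only [map_mul, map_sum, Complex.conj_ofReal, Complex.conj_conj]
  congr 1
  exact Finset.sum_congr rfl fun j _ => mul_comm _ _

lemma formB_conj_symm (β : (Fin 2 → ℝ) → ℝ) (u v : (Fin 2 → ℝ) → ℂ) :
    (starRingEnd ℂ) (formB Ω β u v) = formB Ω β v u := by
  unfold formB
  rw [← integral_conj]
  refine integral_congr_ae (Filter.Eventually.of_forall fun x => ?_)
  simp only [map_mul, Complex.conj_ofReal, Complex.conj_conj]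
  ring

end Hermitian

theorem band_function_derivative_formula_general
    (Ω : Set (Fin 2 → ℝ))
    (α β : (Fin 2 → ℝ) → ℝ)
    (k : Fin 2 → ℝ) (i : Fin 2)
    (u : ℝ → (Fin 2 → ℝ) → ℂ) (w : (Fin 2 → ℝ) → ℂ) (lam : ℝ → ℝ) (lam' : ℝ)
    -- (1) differentiability of the family at `t = 0` with derivative `w`, and
    -- differentiability of the quadratic forms with Leibniz-rule derivatives
    (hA' : HasDerivAt
      (fun t => formA Ω α (k + t • (Pi.single i 1 : Fin 2 → ℝ)) (u t) (u t))
      (formA Ω α k w (u 0) + formA Ω α k (u 0) w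
        + 2 * (k i : ℂ) * formMa Ω α (u 0) (u 0) + formMai Ω α i (u 0) (u 0)) 0)
    (hB' : HasDerivAt (fun t => formB Ω β (u t) (u t))
      (formB Ω β w (u 0) + formB Ω β (u 0) w) 0)
    -- (2) eigenvalue relation
    (hlam : HasDerivAt lam lam' 0)
    (heig : ∀ᶠ t in nhds (0 : ℝ),
      formA Ω α (k + t • (Pi.single i 1 : Fin 2 → ℝ)) (u t) (u t)
        = (lam t : ℂ) * formB Ω β (u t) (u t))
    (heig0 : formA Ω α k (u 0) w = (lam 0 : ℂ) * formB Ω β (u 0) w)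
    -- (3) normalization
    (hnorm : ∀ᶠ t in nhds (0 : ℝ), formB Ω β (u t) (u t) = 1) :
    (lam' : ℂ) = 2 * (k i : ℂ) * formMa Ω α (u 0) (u 0) + formMai Ω α i (u 0) (u 0) := by
  have hB_zero : formB Ω β w (u 0) + formB Ω β (u 0) w = 0 :=
    hB'.unique ((hasDerivAt_const (0 : ℝ) (1 : ℂ)).congr_of_eventuallyEq hnorm)
  have hA_eq_lam : (fun t => formA Ω α (k + t • (Pi.single i 1 : Fin 2 → ℝ)) (u t) (u t))
      =ᶠ[nhds 0] fun t => (lam t : ℂ) := by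
    filter_upwards [heig, hnorm] with t ht_eig ht_norm
    rw [ht_eig, ht_norm, mul_one]
  have hlam' := hA'.unique (hlam.ofReal_comp.congr_of_eventuallyEq hA_eq_lam)
  have heig0_symm : formA Ω α k w (u 0) = (lam 0 : ℂ) * formB Ω β w (u 0) := by
    rw [← formA_conj_symm, heig0, map_mul, formB_conj_symm, Complex.conj_ofReal]
  rw [← hlam', heig0_symm, heig0]
  linear_combination (lam 0 : ℂ) * hB_zero

/-- First-derivative formula for a normalized eigenvalue branch of the Bloch
eigenvalue problem: `λ'(0) = 2kᵢ m_α(u₀,u₀) + m_{αi}(u₀,u₀)`. -/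
theorem band_function_derivative_formula
    (Ω : Set (Fin 2 → ℝ)) (hΩm : MeasurableSet Ω) (hΩb : Bornology.IsBounded Ω)
    (α β : (Fin 2 → ℝ) → ℝ) (hαm : Measurable α) (hβm : Measurable β)
    (hαb : ∃ Cα, ∀ x, |α x| ≤ Cα) (hβb : ∃ Cβ, ∀ x, |β x| ≤ Cβ)
    (k : Fin 2 → ℝ) (i : Fin 2)
    (u : ℝ → (Fin 2 → ℝ) → ℂ) (w : (Fin 2 → ℝ) → ℂ) (lam : ℝ → ℝ) (lam' : ℝ)
    -- the family consists of admissible functions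
    (husmooth : ∀ᶠ t in nhds (0 : ℝ), ContDiff ℝ 1 (u t))
    (hu2 : ∀ᶠ t in nhds (0 : ℝ), MemLp (u t) 2 (volume.restrict Ω) ∧
      ∀ j : Fin 2, MemLp (fun x => pd2 j (u t) x) 2 (volume.restrict Ω))
    (hwsmooth : ContDiff ℝ 1 w)
    (hw2 : MemLp w 2 (volume.restrict Ω) ∧
      ∀ j : Fin 2, MemLp (fun x => pd2 j w x) 2 (volume.restrict Ω))
    -- (1) differentiability of the family at `t = 0` with derivative `w`, and
    -- differentiability of the quadratic forms with Leibniz-rule derivatives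
    (hderiv : ∀ x, HasDerivAt (fun t => u t x) (w x) 0)
    (hA' : HasDerivAt
      (fun t => formA Ω α (k + t • (Pi.single i 1 : Fin 2 → ℝ)) (u t) (u t))
      (formA Ω α k w (u 0) + formA Ω α k (u 0) w
        + 2 * (k i : ℂ) * formMa Ω α (u 0) (u 0) + formMai Ω α i (u 0) (u 0)) 0)
    (hB' : HasDerivAt (fun t => formB Ω β (u t) (u t))
      (formB Ω β w (u 0) + formB Ω β (u 0) w) 0)
    -- (2) eigenvalue relation
    (hlam : HasDerivAt lam lam' 0)
    (heig : ∀ᶠ t in nhds (0 : ℝ),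
      formA Ω α (k + t • (Pi.single i 1 : Fin 2 → ℝ)) (u t) (u t)
        = (lam t : ℂ) * formB Ω β (u t) (u t))
    (heig0 : formA Ω α k (u 0) w = (lam 0 : ℂ) * formB Ω β (u 0) w)
    -- (3) normalization
    (hnorm : ∀ᶠ t in nhds (0 : ℝ), formB Ω β (u t) (u t) = 1) :
    (lam' : ℂ) = 2 * (k i : ℂ) * formMa Ω α (u 0) (u 0) + formMai Ω α i (u 0) (u 0) :=
  band_function_derivative_formula_general Ω α β k i u w lam lam' hA' hB' hlam heig heig0 hnorm
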